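/- Let α ∈ (0,1) and n ≥ 2, and let p_n* be a real polynomial of degree ≤ α·n, not identically zero, that maximizes ‖p‖_{[−1,1]}/‖p‖_{E_n} among all such polynomials, normalized so that ‖p_n*‖_{[−1,1]} = 1 = p_n*(x_n*) for some x_n* ∈ [−1,1]. Then the real zeros of p_n* are separated by the points of E_n: for any two distinct real zeros x_1 < x_2 of p_n*, there exists a gridpoint ξ ∈ E_n with x_1 ≤ ξ ≤ x_2. -/

import Mathlib

open MeasureTheory Polynomial Filter Set

/-- The `n`-grid: `n` equally spaced points in `[-1,1]` including the endpoints. -/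
noncomputable def nGrid (n : ℕ) : Set ℝ :=
  {x | ∃ k : ℕ, 1 ≤ k ∧ k ≤ n ∧ x = (2 * (k : ℝ) - n - 1) / ((n : ℝ) - 1)}

/-- Uniform norm of a real polynomial on the interval `[-1,1]`. -/
noncomputable def normI (p : Polynomial ℝ) : ℝ :=
  sSup ((fun x => |p.eval x|) '' Set.Icc (-1 : ℝ) 1)

/-- Uniform norm of a real polynomial on the `n`-grid. -/
noncomputable def normE (n : ℕ) (p : Polynomial ℝ) : ℝ :=
  sSup ((fun x => |p.eval x|) '' nGrid n)

/-- The constant `C(α)`. -/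
noncomputable def Cconst (α : ℝ) : ℝ :=
  ((1 + α) * Real.log (1 + α) + (1 - α) * Real.log (1 - α)) / 2

lemma nGrid_eq (n : ℕ) :
    nGrid n = ↑((Finset.Icc 1 n).image fun k : ℕ => (2 * (k:ℝ) - n - 1) / ((n:ℝ) - 1)) := by
  ext y
  simp only [nGrid, mem_setOf_eq, Finset.coe_image, Set.mem_image, Finset.mem_coe,
    Finset.mem_Icc]
  constructor
  · rintro ⟨k, h1, h2, rfl⟩; exact ⟨k, ⟨h1, h2⟩, rfl⟩
  · rintro ⟨k, ⟨h1, h2⟩, rfl⟩; exact ⟨k, h1, h2, rfl⟩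

lemma nGrid_finite (n : ℕ) : (nGrid n).Finite := by
  rw [nGrid_eq]; exact Finset.finite_toSet _

lemma neg_one_mem_nGrid (n : ℕ) (hn : 2 ≤ n) : (-1 : ℝ) ∈ nGrid n := by
  refine ⟨1, le_refl 1, by omega, ?_⟩
  have h : (n : ℝ) - 1 ≠ 0 := by
    have : (2:ℝ) ≤ n := by exact_mod_cast hn
    linarith
  field_simp
  ring

lemma nGrid_subset_Icc (n : ℕ) (hn : 2 ≤ n) : nGrid n ⊆ Set.Icc (-1 : ℝ) 1 := by
  rintro y ⟨k, h1, h2, rfl⟩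
  have hn' : (2:ℝ) ≤ n := by exact_mod_cast hn
  have hk1 : (1:ℝ) ≤ k := by exact_mod_cast h1
  have hk2 : (k:ℝ) ≤ n := by exact_mod_cast h2
  have hd : (0:ℝ) < (n:ℝ) - 1 := by linarith
  constructor
  · rw [le_div_iff₀ hd]; linarith
  · rw [div_le_iff₀ hd]; linarith

lemma normI_ge (p : Polynomial ℝ) (y : ℝ) (hy : y ∈ Set.Icc (-1:ℝ) 1) :
    |p.eval y| ≤ normI p := by
  refine le_csSup ?_ ⟨y, hy, rfl⟩
  exact IsCompact.bddAbove_image isCompact_Icc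
    ((continuous_abs.comp p.continuous).continuousOn)

lemma normE_ge (n : ℕ) (p : Polynomial ℝ) (y : ℝ) (hy : y ∈ nGrid n) :
    |p.eval y| ≤ normE n p := by
  refine le_csSup ?_ ⟨y, hy, rfl⟩
  exact ((nGrid_finite n).image _).bddAbove

lemma normE_le (n : ℕ) (hn : 2 ≤ n) (p : Polynomial ℝ) (M : ℝ)
    (h : ∀ y ∈ nGrid n, |p.eval y| ≤ M) : normE n p ≤ M := by
  refine csSup_le ⟨|p.eval (-1)|, ⟨-1, neg_one_mem_nGrid n hn, rfl⟩⟩ ?_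
  rintro _ ⟨y, hy, rfl⟩; exact h y hy

lemma normI_ge' (p : Polynomial ℝ) : ∀ y ∈ Set.Icc (-1:ℝ) 1, |p.eval y| ≤ normI p := normI_ge p

lemma normE_pos (α : ℝ) (hα : α ∈ Set.Ioo (0:ℝ) 1) (n : ℕ) (hn : 2 ≤ n)
    (p : Polynomial ℝ) (hp : p ≠ 0) (hdeg : (p.natDegree : ℝ) ≤ α * n) :
    0 < normE n p := by
  by_contra h
  push_neg at h
  have hall : ∀ y ∈ nGrid n, p.eval y = 0 := by
    intro y hy
    have := (normE_ge n p y hy).trans h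
    have := abs_nonneg (p.eval y)
    have : |p.eval y| = 0 := le_antisymm (by linarith) (by linarith)
    exact abs_eq_zero.mp this
  -- the grid has n distinct points, all roots of p
  set f : ℕ → ℝ := fun k => (2 * (k:ℝ) - n - 1) / ((n:ℝ) - 1) with hf
  have hd : (0:ℝ) < (n:ℝ) - 1 := by
    have : (2:ℝ) ≤ n := by exact_mod_cast hn
    linarith
  have hinj : Set.InjOn f ↑(Finset.Icc 1 n) := by
    intro a _ b _ hab
    simp only [hf] at hab
    rw [div_eq_div_iff hd.ne' hd.ne'] at hab
    have : (2 * (a:ℝ) - (n:ℝ) - 1) = (2 * (b:ℝ) - n - 1) := mul_right_cancel₀ hd.ne' hab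
    have : (a:ℝ) = b := by linarith
    exact_mod_cast this
  set s : Finset ℝ := (Finset.Icc 1 n).image f with hs
  have hcard : s.card = n := by
    rw [hs, Finset.card_image_of_injOn hinj, Nat.card_Icc]; omega
  have hsub : s.val ≤ p.roots := by
    refine (Multiset.le_iff_subset s.nodup).mpr fun a ha => ?_
    have ha' : a ∈ s := ha
    have hroot : p.IsRoot a := by
      obtain ⟨k, hk, rfl⟩ := Finset.mem_image.mp ha'
      exact hall _ ⟨k, (Finset.mem_Icc.mp hk).1, (Finset.mem_Icc.mp hk).2, rfl⟩
    exact (Polynomial.mem_roots hp).mpr hroot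
  have : (n:ℝ) ≤ p.natDegree := by
    have h1 : s.card ≤ Multiset.card p.roots := by
      simpa using Multiset.card_le_card hsub
    have := p.card_roots' 
    exact_mod_cast hcard ▸ (h1.trans this)
  have hn0 : (0:ℝ) < n := by positivity
  have hα1 : α < 1 := hα.2
  nlinarith [hα.1]

set_option maxHeartbeats 2000000 in
theorem extremal_poly_zeros_separated (α : ℝ) (hα : α ∈ Set.Ioo (0 : ℝ) 1)
    (n : ℕ) (hn : 2 ≤ n)
    (p : Polynomial ℝ) (hp : p ≠ 0) (hdeg : (p.natDegree : ℝ) ≤ α * n)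
    (hmax : ∀ q : Polynomial ℝ, q ≠ 0 → (q.natDegree : ℝ) ≤ α * n →
      normI q / normE n q ≤ normI p / normE n p)
    (x : ℝ) (hx : x ∈ Set.Icc (-1 : ℝ) 1)
    (hnorm : normI p = 1) (hval : p.eval x = 1) :
    ∀ x₁ x₂ : ℝ, p.IsRoot x₁ → p.IsRoot x₂ → x₁ < x₂ →
      ∃ ξ ∈ nGrid n, x₁ ≤ ξ ∧ ξ ≤ x₂ := by
  intro x₁ x₂ hr₁ hr₂ hlt
  by_contra hcon
  push_neg at hcon
  -- every grid point lies strictly outside [x₁, x₂]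
  have hP : ∀ ξ ∈ nGrid n, 0 < (ξ - x₁) * (ξ - x₂) := by
    intro ξ hξ
    rcases lt_or_ge ξ x₁ with h | h
    · have : ξ - x₂ < 0 := by linarith
      exact mul_pos_of_neg_of_neg (by linarith) this
    · have h2 : x₂ < ξ := hcon ξ hξ h
      exact mul_pos (by linarith) (by linarith)
  -- factor p = (X - x₁)(X - x₂) g
  obtain ⟨g₁, hg₁⟩ := (dvd_iff_isRoot.mpr hr₁)
  have hg₁root : g₁.IsRoot x₂ := by
    have := hr₂
    rw [IsRoot, hg₁] at this
    simp only [eval_mul, eval_sub, eval_X, eval_C] at this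
    rcases mul_eq_zero.mp this with h | h
    · exact absurd h (by intro h'; nlinarith)
    · exact h
  obtain ⟨g, hg₂⟩ := (dvd_iff_isRoot.mpr hg₁root)
  have hpfac : p = (X - C x₁) * (X - C x₂) * g := by rw [hg₁, hg₂]; ring
  have hgne : g ≠ 0 := by
    intro h; rw [h, mul_zero] at hpfac; exact hp hpfac
  have hdeg2 : p.natDegree = 2 + g.natDegree := by
    rw [hpfac, natDegree_mul (mul_ne_zero (X_sub_C_ne_zero x₁) (X_sub_C_ne_zero x₂)) hgne, natDegree_mul (X_sub_C_ne_zero x₁)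
      (X_sub_C_ne_zero x₂), natDegree_X_sub_C, natDegree_X_sub_C]
  have h2deg : (2:ℝ) ≤ α * n := by
    have : (2:ℝ) ≤ (p.natDegree : ℝ) := by exact_mod_cast (by omega : 2 ≤ p.natDegree)
    linarith
  have hEp_pos : 0 < normE n p := normE_pos α hα n hn p hp hdeg
  have hEp_le : normE n p ≤ 1 := by
    refine normE_le n hn p 1 fun y hy => ?_
    rw [← hnorm]; exact normI_ge p y (nGrid_subset_Icc n hn hy)
  have hIbdd : BddAbove ((fun y => |Polynomial.eval y p|) '' Set.Icc (-1:ℝ) 1) :=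
    IsCompact.bddAbove_image isCompact_Icc ((continuous_abs.comp p.continuous).continuousOn)
  by_cases hxg : x ∈ nGrid n
  · -- x is a grid point : normE p = 1, ratio p = 1; build a better q of degree 2
    have hEp1 : normE n p = 1 := by
      refine le_antisymm hEp_le ?_
      have := normE_ge n p x hxg
      rw [hval] at this; simpa using this
    have hd : (0:ℝ) < (n:ℝ) - 1 := by
      have : (2:ℝ) ≤ n := by exact_mod_cast hn
      linarith
    obtain ⟨h, hh⟩ : ∃ h : ℝ, h = 2 / ((n:ℝ) - 1) := ⟨_, rfl⟩
    have hhpos : 0 < h := by rw [hh]; positivity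
    have hhle : h ≤ 2 := by
      rw [hh, div_le_iff₀ hd]
      have : (2:ℝ) ≤ n := by exact_mod_cast hn
      nlinarith
    obtain ⟨q, hq⟩ : ∃ q : Polynomial ℝ,
        q = C 1 - C (1/4) * ((X - C (-1)) * (X - C (-1 + h))) := ⟨_, rfl⟩
    have hqeval : ∀ s : ℝ, q.eval s = 1 - (1/4) * ((s + 1) * (s - (-1 + h))) := by
      intro s; rw [hq]
      simp only [eval_sub, eval_mul, eval_add, eval_one, eval_C, eval_X]; ring
    have hqne : q ≠ 0 := by
      intro h0
      have h1 := hqeval (-1)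
      rw [h0] at h1
      norm_num at h1
    have hqdeg : (q.natDegree : ℝ) ≤ α * n := by
      have h1 : q.natDegree ≤ 2 := by rw [hq]; compute_degree
      have h2 : (q.natDegree : ℝ) ≤ 2 := by exact_mod_cast h1
      linarith
    -- on the grid |q| ≤ 1
    have hqgrid : ∀ y ∈ nGrid n, |q.eval y| ≤ 1 := by
      rintro y ⟨k, hk1, hk2, rfl⟩
      have hk1' : (1:ℝ) ≤ k := by exact_mod_cast hk1
      have hk2' : (k:ℝ) ≤ n := by exact_mod_cast hk2
      have hA : ((2 * (k:ℝ) - n - 1) / ((n:ℝ) - 1) + 1)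
          * ((2 * (k:ℝ) - n - 1) / ((n:ℝ) - 1) - (-1 + h))
          = ((k:ℝ) - 1) * ((k:ℝ) - 2) * h^2 := by
        rw [hh]; field_simp; ring
      have hA0 : 0 ≤ ((k:ℝ) - 1) * ((k:ℝ) - 2) * h^2 := by
        rcases Nat.lt_or_ge k 2 with hk | hk
        · have : k = 1 := by omega
          subst this; norm_num
        · have h2k : (2:ℝ) ≤ k := by exact_mod_cast hk
          have := mul_nonneg (mul_nonneg (by linarith : (0:ℝ) ≤ (k:ℝ) - 1)
            (by linarith : (0:ℝ) ≤ (k:ℝ) - 2)) (sq_nonneg h)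
          calc (0:ℝ) ≤ ((k:ℝ) - 1) * ((k:ℝ) - 2) * (h^2) := by
                nlinarith [sq_nonneg h]
            _ = _ := by ring
      have hA4 : ((k:ℝ) - 1) * ((k:ℝ) - 2) * h^2 ≤ 4 := by
        have h1a : ((k:ℝ) - 1) * ((k:ℝ) - 2) ≤ ((k:ℝ) - 1)^2 := by nlinarith
        have h1b : ((k:ℝ) - 1)^2 ≤ ((n:ℝ) - 1)^2 := by nlinarith
        have h2 : h^2 * ((n:ℝ)-1)^2 = 4 := by
          rw [hh, div_pow, div_mul_cancel₀ _ (pow_ne_zero 2 hd.ne')]; norm_num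
        nlinarith [sq_nonneg h]
      rw [hqeval, hA, abs_le]
      constructor
      · linarith
      · linarith
    have hqE_le : normE n q ≤ 1 := normE_le n hn q 1 hqgrid
    have hqE_pos : 0 < normE n q := normE_pos α hα n hn q hqne hqdeg
    -- |q| at midpoint of first gap exceeds 1
    have hm : (-1 + h/2 : ℝ) ∈ Set.Icc (-1:ℝ) 1 := by
      constructor
      · linarith
      · linarith
    have hqI : 1 + h^2/16 ≤ normI q := by
      have hval' : q.eval (-1 + h/2) = 1 + h^2/16 := by rw [hqeval]; ring
      have habs : |q.eval (-1 + h/2)| = 1 + h^2/16 := by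
        rw [hval']; rw [abs_of_pos]; positivity
      rw [← habs]
      refine le_csSup (IsCompact.bddAbove_image isCompact_Icc
        ((continuous_abs.comp q.continuous).continuousOn)) ⟨_, hm, rfl⟩
    have hfin := hmax q hqne hqdeg
    rw [hnorm, hEp1] at hfin
    norm_num at hfin
    have hIq0 : 0 ≤ normI q := le_trans (by positivity) hqI
    have h2 : normI q ≤ normI q / normE n q := by
      rw [le_div_iff₀ hqE_pos]
      nlinarith
    have h4 : 0 < h^2 := pow_pos hhpos 2
    linarith
  · -- x is not a grid point: move the zero pair
    have hfing := nGrid_finite n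
    obtain ⟨S, hS⟩ : ∃ S : Finset ℝ, S = hfing.toFinset := ⟨_, rfl⟩
    have hm1S : (-1:ℝ) ∈ S := by
      rw [hS]; exact hfing.mem_toFinset.mpr (neg_one_mem_nGrid n hn)
    have hSne : S.Nonempty := ⟨-1, hm1S⟩
    have hSmem : ∀ ξ, ξ ∈ S ↔ ξ ∈ nGrid n := by
      intro ξ; rw [hS]; exact hfing.mem_toFinset
    obtain ⟨f, hfdef⟩ : ∃ f : ℝ → ℝ,
        f = fun ξ => (ξ - x)^2 / ((ξ - x₁) * (ξ - x₂)) := ⟨_, rfl⟩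
    have hfpos : ∀ ξ ∈ S, 0 < f ξ := by
      intro ξ hξ
      have hξg : ξ ∈ nGrid n := (hSmem ξ).mp hξ
      have hxne : ξ ≠ x := by rintro rfl; exact hxg hξg
      rw [hfdef]
      exact div_pos (pow_two_pos_of_ne_zero (sub_ne_zero.mpr hxne)) (hP ξ hξg)
    obtain ⟨cmin, hcmin⟩ : ∃ c : ℝ, c = S.inf' hSne f := ⟨_, rfl⟩
    obtain ⟨cmax, hcmax⟩ : ∃ c : ℝ, c = S.sup' hSne f := ⟨_, rfl⟩
    have hcmin_pos : 0 < cmin := by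
      rw [hcmin]
      exact (Finset.lt_inf'_iff hSne).mpr hfpos
    have hcmin_le : cmin ≤ cmax := by
      rw [hcmin, hcmax]
      exact le_trans (Finset.inf'_le f hm1S) (Finset.le_sup' f hm1S)
    have hcmax_pos : 0 < cmax := lt_of_lt_of_le hcmin_pos hcmin_le
    obtain ⟨q, hq⟩ : ∃ q : Polynomial ℝ,
        q = ((X - C x₁) * (X - C x₂) - C cmax⁻¹ * (X - C x)^2) * g := ⟨_, rfl⟩
    have hqeval : ∀ s : ℝ,
        q.eval s = ((s - x₁) * (s - x₂) - cmax⁻¹ * (s - x)^2) * g.eval s := by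
      intro s; rw [hq]
      simp only [eval_mul, eval_sub, eval_pow, eval_C, eval_X]
    have hpeval : ∀ s : ℝ, p.eval s = ((s - x₁) * (s - x₂)) * g.eval s := by
      intro s; rw [hpfac]
      simp only [eval_mul, eval_sub, eval_C, eval_X]
    have hqx : q.eval x = 1 := by
      have h0 : ((x - x₁) * (x - x₂)) * g.eval x = 1 := by rw [← hpeval x]; exact hval
      calc q.eval x = ((x - x₁) * (x - x₂) - cmax⁻¹ * (x - x)^2) * g.eval x := hqeval x
        _ = ((x - x₁) * (x - x₂)) * g.eval x := by rw [sub_self]; ring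
        _ = 1 := h0
    have hqne : q ≠ 0 := by
      intro h0; rw [h0] at hqx; simp at hqx
    have hqdeg : (q.natDegree : ℝ) ≤ α * n := by
      have hA2 : ((X - C x₁) * (X - C x₂) - C cmax⁻¹ * (X - C x)^2).natDegree ≤ 2 := by
        compute_degree
      have h1 : q.natDegree ≤ 2 + g.natDegree := by
        rw [hq]
        exact le_trans natDegree_mul_le (by omega)
      have h2 : q.natDegree ≤ p.natDegree := by omega
      have h3 : (q.natDegree : ℝ) ≤ (p.natDegree : ℝ) := by exact_mod_cast h2
      linarith
    obtain ⟨r, hr⟩ : ∃ r : ℝ, r = 1 - cmin / cmax := ⟨_, rfl⟩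
    have hr0 : 0 ≤ r := by
      rw [hr]
      have : cmin / cmax ≤ 1 := by rw [div_le_one hcmax_pos]; exact hcmin_le
      linarith
    have hr1 : r < 1 := by
      rw [hr]
      have : 0 < cmin / cmax := div_pos hcmin_pos hcmax_pos
      linarith
    have key : ∀ y ∈ nGrid n, |q.eval y| ≤ r * normE n p := by
      intro ξ hξ
      have hξS : ξ ∈ S := (hSmem ξ).mpr hξ
      have hPξ : 0 < (ξ - x₁) * (ξ - x₂) := hP ξ hξ
      have hf1 : cmin ≤ f ξ := hcmin ▸ Finset.inf'_le f hξS
      have hf2 : f ξ ≤ cmax := hcmax ▸ Finset.le_sup' f hξS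
      have hfval : f ξ = (ξ - x)^2 / ((ξ - x₁) * (ξ - x₂)) := by rw [hfdef]
      rw [hfval] at hf1 hf2
      have hw1 : (ξ - x)^2 ≤ cmax * ((ξ - x₁) * (ξ - x₂)) :=
        (div_le_iff₀ hPξ).mp hf2
      have hw2 : cmin * ((ξ - x₁) * (ξ - x₂)) ≤ (ξ - x)^2 :=
        (le_div_iff₀ hPξ).mp hf1
      have h1 : 0 ≤ (ξ - x₁) * (ξ - x₂) - cmax⁻¹ * (ξ - x)^2 := by
        have h1a : cmax⁻¹ * (ξ - x)^2 ≤ cmax⁻¹ * (cmax * ((ξ - x₁) * (ξ - x₂))) :=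
          mul_le_mul_of_nonneg_left hw1 (inv_nonneg.mpr hcmax_pos.le)
        rw [← mul_assoc, inv_mul_cancel₀ hcmax_pos.ne', one_mul] at h1a
        linarith
      have h2 : (ξ - x₁) * (ξ - x₂) - cmax⁻¹ * (ξ - x)^2 ≤ r * ((ξ - x₁) * (ξ - x₂)) := by
        have h2a : cmax⁻¹ * (cmin * ((ξ - x₁) * (ξ - x₂))) ≤ cmax⁻¹ * (ξ - x)^2 :=
          mul_le_mul_of_nonneg_left hw2 (inv_nonneg.mpr hcmax_pos.le)
        have h2b : r * ((ξ - x₁) * (ξ - x₂))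
            = (ξ - x₁) * (ξ - x₂) - cmax⁻¹ * (cmin * ((ξ - x₁) * (ξ - x₂))) := by
          rw [hr]; field_simp
        rw [h2b]; linarith
      have habs : |q.eval ξ|
          = ((ξ - x₁) * (ξ - x₂) - cmax⁻¹ * (ξ - x)^2) * |g.eval ξ| := by
        rw [hqeval ξ, abs_mul, abs_of_nonneg h1]
      have hpv : |p.eval ξ| = ((ξ - x₁) * (ξ - x₂)) * |g.eval ξ| := by
        rw [hpeval ξ, abs_mul, abs_of_pos hPξ]
      have hEξ : |p.eval ξ| ≤ normE n p := normE_ge n p ξ hξ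
      have hgabs : (0:ℝ) ≤ |g.eval ξ| := abs_nonneg _
      have hstep : ((ξ - x₁) * (ξ - x₂) - cmax⁻¹ * (ξ - x)^2) * |g.eval ξ|
          ≤ r * (((ξ - x₁) * (ξ - x₂)) * |g.eval ξ|) := by nlinarith
      have hstep2 : r * (((ξ - x₁) * (ξ - x₂)) * |g.eval ξ|) ≤ r * normE n p := by
        apply mul_le_mul_of_nonneg_left _ hr0
        rw [← hpv]; exact hEξ
      rw [habs]; linarith
    have hqE_le : normE n q ≤ r * normE n p := normE_le n hn q _ key
    have hqE_pos : 0 < normE n q := normE_pos α hα n hn q hqne hqdeg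
    have hqI : 1 ≤ normI q := by
      have hb : |q.eval x| ≤ normI q := by
        refine le_csSup (IsCompact.bddAbove_image isCompact_Icc
          ((continuous_abs.comp q.continuous).continuousOn)) ⟨x, hx, rfl⟩
      rw [hqx] at hb; simpa using hb
    have hElt : normE n q < normE n p := lt_of_le_of_lt hqE_le (by nlinarith)
    have hfin2 := hmax q hqne hqdeg
    rw [hnorm] at hfin2
    have hone : 1 / normE n q ≤ normI q / normE n q := by
      apply div_le_div_of_nonneg_right hqI hqE_pos.le
    have hlt2 : 1 / normE n p < 1 / normE n q :=
      one_div_lt_one_div_of_lt hqE_pos hElt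
    linarith
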